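/- Fix α > 0 and let v : ℝ → ℝ be smooth and positive. Then for the metric g = v^{-4/3}g_s the pointwise identity Q^α_g = (α/3)·Δ_g R^α_g + (R^α_g)² holds; explicitly, v^{5/3}·( (α²/9)v'''' + (10α/9)v'' + v ) = (α/3)·( v^{4/3}(R^α_g)'' + (2/3)v^{1/3}v'(R^α_g)' ) + (R^α_g)², where R^α_g = (α/3)v^{1/3}v'' − (2α/9)v^{-2/3}(v')² + v^{4/3}. -/

import Mathlib

open Real

/-- For `g = v^{-4/3} g_s`: the `α`-scalar curvature
`R^α_g = (α/3) v^{1/3} v'' − (2α/9) v^{-2/3} (v')² + v^{4/3}`. -/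
noncomputable def Rcurv (α : ℝ) (v : ℝ → ℝ) : ℝ → ℝ :=
  fun θ => (α/3) * (v θ) ^ ((1 : ℝ)/3) * iteratedDeriv 2 v θ -
    (2 * α/9) * (v θ) ^ ((-2 : ℝ)/3) * (deriv v θ) ^ 2 + (v θ) ^ ((4 : ℝ)/3)

private lemma rpowD (v : ℝ → ℝ) (hd : Differentiable ℝ v) (hpos : ∀ θ, 0 < v θ)
    (p q : ℝ) (h : q = p - 1) (θ : ℝ) :
    HasDerivAt (fun t => v t ^ p) (p * v θ ^ q * deriv v θ) θ := by
  subst h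
  have h2 := ((hd θ).hasDerivAt).rpow_const (p := p) (Or.inl (hpos θ).ne')
  convert h2 using 1
  ring

/-- The pointwise identity `Q^α_g = (α/3)·Δ_g R^α_g + (R^α_g)²` for `g = v^{-4/3} g_s`
(final remark of the paper). -/
theorem Q_eq_lap_R_add_R_sq
    (α : ℝ) (hα : 0 < α) (v : ℝ → ℝ) (hv : ContDiff ℝ (⊤ : ℕ∞) v) (hpos : ∀ θ, 0 < v θ) :
    ∀ θ : ℝ,
      (v θ) ^ ((5 : ℝ)/3) *
          ((α ^ 2/9) * iteratedDeriv 4 v θ + (10 * α/9) * iteratedDeriv 2 v θ + v θ) =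
        (α/3) * ((v θ) ^ ((4 : ℝ)/3) * iteratedDeriv 2 (Rcurv α v) θ +
            (2/3) * (v θ) ^ ((1 : ℝ)/3) * deriv v θ * deriv (Rcurv α v) θ) +
          (Rcurv α v θ) ^ 2 := by
  have hva : Differentiable ℝ v := hv.differentiable (by simp)
  have hdiff : ∀ n : ℕ, Differentiable ℝ (iteratedDeriv n v) := by
    intro n
    rw [iteratedDeriv_eq_iterate]
    exact ((hv.of_le (by simp)).iterate_deriv n).differentiable (by norm_num)
  have key : ∀ (n : ℕ) (t : ℝ), HasDerivAt (iteratedDeriv n v) (iteratedDeriv (n+1) v t) t := by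
    intro n t
    rw [iteratedDeriv_succ]
    exact (hdiff n t).hasDerivAt
  have hD0 : ∀ t, HasDerivAt v (deriv v t) t := fun t => (hva t).hasDerivAt
  have hD1 : ∀ t, HasDerivAt (deriv v) (iteratedDeriv 2 v t) t := by
    intro t
    have h := key 1 t
    rwa [iteratedDeriv_one] at h
  have hD2 : ∀ t, HasDerivAt (iteratedDeriv 2 v) (iteratedDeriv 3 v t) t := fun t => key 2 t
  have hD3 : ∀ t, HasDerivAt (iteratedDeriv 3 v) (iteratedDeriv 4 v t) t := fun t => key 3 t
  have P13 : ∀ t, HasDerivAt (fun s => v s ^ ((1:ℝ)/3))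
      ((1:ℝ)/3 * v t ^ ((-2:ℝ)/3) * deriv v t) t :=
    rpowD v hva hpos _ _ (by norm_num)
  have Pm23 : ∀ t, HasDerivAt (fun s => v s ^ ((-2:ℝ)/3))
      ((-2:ℝ)/3 * v t ^ ((-5:ℝ)/3) * deriv v t) t :=
    rpowD v hva hpos _ _ (by norm_num)
  have Pm53 : ∀ t, HasDerivAt (fun s => v s ^ ((-5:ℝ)/3))
      ((-5:ℝ)/3 * v t ^ ((-8:ℝ)/3) * deriv v t) t :=
    rpowD v hva hpos _ _ (by norm_num)
  have P43 : ∀ t, HasDerivAt (fun s => v s ^ ((4:ℝ)/3))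
      ((4:ℝ)/3 * v t ^ ((1:ℝ)/3) * deriv v t) t :=
    rpowD v hva hpos _ _ (by norm_num)
  -- first derivative of Rcurv
  have hF1 : ∀ t, HasDerivAt (Rcurv α v)
      (-(α/3) * (v t ^ ((-2:ℝ)/3) * (deriv v t * iteratedDeriv 2 v t))
        + (α/3) * (v t ^ ((1:ℝ)/3) * iteratedDeriv 3 v t)
        + (4*α/27) * (v t ^ ((-5:ℝ)/3) * deriv v t ^ 3)
        + (4/3) * (v t ^ ((1:ℝ)/3) * deriv v t)) t := by
    intro t
    have h : HasDerivAt (fun θ => (α/3) * (v θ) ^ ((1 : ℝ)/3) * iteratedDeriv 2 v θ -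
        (2 * α/9) * (v θ) ^ ((-2 : ℝ)/3) * (deriv v θ) ^ 2 + (v θ) ^ ((4 : ℝ)/3)) _ t :=
      ((((P13 t).const_mul (α/3)).mul (hD2 t)).sub
        (((Pm23 t).const_mul (2 * α/9)).mul ((hD1 t).pow 2))).add (P43 t)
    have h2 : Rcurv α v = fun θ => (α/3) * (v θ) ^ ((1 : ℝ)/3) * iteratedDeriv 2 v θ -
        (2 * α/9) * (v θ) ^ ((-2 : ℝ)/3) * (deriv v θ) ^ 2 + (v θ) ^ ((4 : ℝ)/3) := rfl
    rw [h2]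
    convert h using 1
    simp only [Pi.pow_apply]
    ring
  -- second derivative of Rcurv
  have hF2 : ∀ t, HasDerivAt (fun s =>
      -(α/3) * (v s ^ ((-2:ℝ)/3) * (deriv v s * iteratedDeriv 2 v s))
        + (α/3) * (v s ^ ((1:ℝ)/3) * iteratedDeriv 3 v s)
        + (4*α/27) * (v s ^ ((-5:ℝ)/3) * deriv v s ^ 3)
        + (4/3) * (v s ^ ((1:ℝ)/3) * deriv v s))
      (-(α/3) * (((-2:ℝ)/3 * v t ^ ((-5:ℝ)/3) * deriv v t) * (deriv v t * iteratedDeriv 2 v t)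
            + v t ^ ((-2:ℝ)/3) * (iteratedDeriv 2 v t * iteratedDeriv 2 v t
              + deriv v t * iteratedDeriv 3 v t))
        + (α/3) * (((1:ℝ)/3 * v t ^ ((-2:ℝ)/3) * deriv v t) * iteratedDeriv 3 v t
            + v t ^ ((1:ℝ)/3) * iteratedDeriv 4 v t)
        + (4*α/27) * (((-5:ℝ)/3 * v t ^ ((-8:ℝ)/3) * deriv v t) * deriv v t ^ 3
            + v t ^ ((-5:ℝ)/3) * (3 * deriv v t ^ 2 * iteratedDeriv 2 v t))
        + (4/3) * (((1:ℝ)/3 * v t ^ ((-2:ℝ)/3) * deriv v t) * deriv v t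
            + v t ^ ((1:ℝ)/3) * iteratedDeriv 2 v t)) t := by
    intro t
    have h1 : HasDerivAt (fun s => deriv v s ^ 3) (3 * deriv v t ^ 2 * iteratedDeriv 2 v t) t := by
      have := (hD1 t).pow 3
      norm_num at this
      exact this
    have h2 : HasDerivAt (fun s => deriv v s * iteratedDeriv 2 v s)
        (iteratedDeriv 2 v t * iteratedDeriv 2 v t + deriv v t * iteratedDeriv 3 v t) t :=
      (hD1 t).mul (hD2 t)
    exact (((((Pm23 t).mul h2).const_mul (-(α/3))).add
        (((P13 t).mul (hD3 t)).const_mul (α/3))).add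
        ((((Pm53 t).mul h1).const_mul (4*α/27)))).add
        ((((P13 t).mul (hD1 t)).const_mul (4/3)))
  have hderiv1 : deriv (Rcurv α v) = fun t =>
      -(α/3) * (v t ^ ((-2:ℝ)/3) * (deriv v t * iteratedDeriv 2 v t))
        + (α/3) * (v t ^ ((1:ℝ)/3) * iteratedDeriv 3 v t)
        + (4*α/27) * (v t ^ ((-5:ℝ)/3) * deriv v t ^ 3)
        + (4/3) * (v t ^ ((1:ℝ)/3) * deriv v t) :=
    funext fun t => (hF1 t).deriv
  intro θ
  have hsecond : iteratedDeriv 2 (Rcurv α v) θ =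
      -(α/3) * (((-2:ℝ)/3 * v θ ^ ((-5:ℝ)/3) * deriv v θ) * (deriv v θ * iteratedDeriv 2 v θ)
            + v θ ^ ((-2:ℝ)/3) * (iteratedDeriv 2 v θ * iteratedDeriv 2 v θ
              + deriv v θ * iteratedDeriv 3 v θ))
        + (α/3) * (((1:ℝ)/3 * v θ ^ ((-2:ℝ)/3) * deriv v θ) * iteratedDeriv 3 v θ
            + v θ ^ ((1:ℝ)/3) * iteratedDeriv 4 v θ)
        + (4*α/27) * (((-5:ℝ)/3 * v θ ^ ((-8:ℝ)/3) * deriv v θ) * deriv v θ ^ 3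
            + v θ ^ ((-5:ℝ)/3) * (3 * deriv v θ ^ 2 * iteratedDeriv 2 v θ))
        + (4/3) * (((1:ℝ)/3 * v θ ^ ((-2:ℝ)/3) * deriv v θ) * deriv v θ
            + v θ ^ ((1:ℝ)/3) * iteratedDeriv 2 v θ) := by
    rw [iteratedDeriv_succ, iteratedDeriv_one, hderiv1]
    exact (hF2 θ).deriv
  have hfirst : deriv (Rcurv α v) θ =
      -(α/3) * (v θ ^ ((-2:ℝ)/3) * (deriv v θ * iteratedDeriv 2 v θ))
        + (α/3) * (v θ ^ ((1:ℝ)/3) * iteratedDeriv 3 v θ)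
        + (4*α/27) * (v θ ^ ((-5:ℝ)/3) * deriv v θ ^ 3)
        + (4/3) * (v θ ^ ((1:ℝ)/3) * deriv v θ) := (hF1 θ).deriv
  rw [hsecond, hfirst]
  simp only [Rcurv]
  -- rewrite all rpow's as powers of w := v θ ^ (1/3)
  set w := v θ ^ ((1:ℝ)/3) with hw
  have hwpos : 0 < w := rpow_pos_of_pos (hpos θ) _
  have keyp : ∀ n : ℕ, v θ ^ ((n:ℝ)/3) = w ^ n := by
    intro n
    rw [hw, ← Real.rpow_natCast (v θ ^ ((1:ℝ)/3)) n, ← Real.rpow_mul (hpos θ).le]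
    congr 1
    ring
  have em2 : v θ ^ ((-2:ℝ)/3) = (w ^ 2)⁻¹ := by
    rw [show ((-2:ℝ)/3) = -(((2:ℕ):ℝ)/3) by norm_num, Real.rpow_neg (hpos θ).le, keyp 2]
  have em5 : v θ ^ ((-5:ℝ)/3) = (w ^ 5)⁻¹ := by
    rw [show ((-5:ℝ)/3) = -(((5:ℕ):ℝ)/3) by norm_num, Real.rpow_neg (hpos θ).le, keyp 5]
  have em8 : v θ ^ ((-8:ℝ)/3) = (w ^ 8)⁻¹ := by
    rw [show ((-8:ℝ)/3) = -(((8:ℕ):ℝ)/3) by norm_num, Real.rpow_neg (hpos θ).le, keyp 8]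
  have e4 : v θ ^ ((4:ℝ)/3) = w ^ 4 := by
    rw [show ((4:ℝ)/3) = ((4:ℕ):ℝ)/3 by norm_num, keyp 4]
  have e5 : v θ ^ ((5:ℝ)/3) = w ^ 5 := by
    rw [show ((5:ℝ)/3) = ((5:ℕ):ℝ)/3 by norm_num, keyp 5]
  have e3 : v θ = w ^ 3 := by
    have h := keyp 3
    rw [show (((3:ℕ):ℝ)/3) = 1 by norm_num, Real.rpow_one] at h
    exact h
  rw [em2, em5, em8, e4, e5, e3]
  have hwne : w ≠ 0 := hwpos.ne'
  field_simp
  ring
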